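/- Let M, a, s be positive integers with M > 1 such that ∑_{i=0}^{M-1} (a+i)^2 = s^2, and suppose M = 24·m₁ + 16 for a nonnegative integer m₁. Then for every prime p > 3 with p ≡ 3 (mod 4), there do not exist integers i ≥ 0 and q ≥ 1 with p ∤ q such that 24·m₁ + 17 = p^(2i+1)·q; equivalently, the exact power of p dividing M + 1 is even. -/

import Mathlib

/-!
Summing the squares gives `12 s² = 3 M b² + M (M - 1) (M + 1)` with `b = 2a + M - 1`, which can be
rewritten as `3 ((2s)² + b²) = (M + 1) (3 b² + M (M - 1))`. If `p ^ (2i+1)` exactly divides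
`M + 1`, it divides the sum of two squares `(2s)² + b²`. As `-1` is not a square modulo `p`, a
prime `p ≡ 3 (mod 4)` divides a sum of two squares only by dividing both, so descent gives
`p ^ (i+1) ∣ 2s` and `p ^ (i+1) ∣ b`. Then `p ^ (2i+2)` divides `3 (2s)² - 3 M b² = M (M - 1) (M + 1)`,
which is impossible because `p ∤ M (M - 1)` when `p ∣ M + 1` and `p > 2`.
-/

open Finset

theorem twelve_mul_sum_range_sq {R : Type*} [CommRing R] (a : R) (M : ℕ) :
    12 * ∑ i ∈ range M, (a + i) ^ 2 = 3 * M * (2 * a + M - 1) ^ 2 + M * (M - 1) * (M + 1) := by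
  induction M with
  | zero => simp
  | succ n ih =>
    rw [sum_range_succ, mul_add, ih]
    push_cast
    ring

theorem Prime.not_dvd_mul_sub_one_of_dvd_add_one {p n : ℤ} (hp : Prime p) (h2 : ¬ p ∣ 2)
    (hn : p ∣ n + 1) : ¬ p ∣ n * (n - 1) := by
  intro h
  rcases hp.dvd_or_dvd h with h | h
  · exact hp.not_dvd_one (by simpa using dvd_sub hn h)
  · exact h2 (by simpa [show n + 1 - (n - 1) = 2 by ring] using dvd_sub hn h)

section SumTwoSquares

variable {p : ℕ} [Fact p.Prime]

theorem Int.dvd_right_of_dvd_sq_add_sq (hp : p % 4 = 3) {x y : ℤ}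
    (h : (p : ℤ) ∣ x ^ 2 + y ^ 2) : (p : ℤ) ∣ y := by
  by_contra hy
  rw [← ZMod.intCast_zmod_eq_zero_iff_dvd] at h hy
  push_cast at h
  exact ZMod.mod_four_ne_three_of_sq_eq_neg_sq' hy (eq_neg_of_add_eq_zero_left h) hp

theorem Int.pow_succ_dvd_of_pow_dvd_sq_add_sq (hp : p % 4 = 3) (k : ℕ) {x y : ℤ}
    (h : (p : ℤ) ^ (2 * k + 1) ∣ x ^ 2 + y ^ 2) :
    (p : ℤ) ^ (k + 1) ∣ x ∧ (p : ℤ) ^ (k + 1) ∣ y := by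
  induction k generalizing x y with
  | zero =>
    simp only [mul_zero, zero_add, pow_one] at h ⊢
    exact ⟨dvd_right_of_dvd_sq_add_sq hp (add_comm (x ^ 2) _ ▸ h), dvd_right_of_dvd_sq_add_sq hp h⟩
  | succ k ih =>
    have hp1 : (p : ℤ) ∣ x ^ 2 + y ^ 2 := (dvd_pow_self _ (by omega)).trans h
    obtain ⟨x', rfl⟩ := dvd_right_of_dvd_sq_add_sq hp (add_comm (x ^ 2) _ ▸ hp1)
    obtain ⟨y', rfl⟩ := dvd_right_of_dvd_sq_add_sq hp hp1
    have hp0 : (p : ℤ) ^ 2 ≠ 0 := pow_ne_zero _ (by exact_mod_cast (Fact.out : p.Prime).ne_zero)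
    rw [show 2 * (k + 1) + 1 = 2 + (2 * k + 1) by ring, pow_add,
      show (p * x' : ℤ) ^ 2 + (p * y') ^ 2 = p ^ 2 * (x' ^ 2 + y' ^ 2) by ring,
      mul_dvd_mul_iff_left hp0] at h
    obtain ⟨hx, hy⟩ := ih h
    rw [pow_succ']
    exact ⟨mul_dvd_mul_left _ hx, mul_dvd_mul_left _ hy⟩

theorem add_one_ne_prime_pow_odd_mul (hp3 : 3 < p) (hp4 : p % 4 = 3) {n x y : ℤ}
    (h : 3 * x ^ 2 = 3 * n * y ^ 2 + n * (n - 1) * (n + 1)) (i : ℕ) {q : ℤ}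
    (hq : ¬ (p : ℤ) ∣ q) : n + 1 ≠ p ^ (2 * i + 1) * q := by
  intro hn
  have hpZ : Prime (p : ℤ) := Nat.prime_iff_prime_int.mp Fact.out
  have hsum_sq : (p : ℤ) ^ (2 * i + 1) ∣ x ^ 2 + y ^ 2 := by
    have hcop : IsCoprime (p : ℤ) 3 := by
      exact_mod_cast Nat.isCoprime_iff_coprime.mpr
        ((Nat.coprime_primes Fact.out Nat.prime_three).mpr (by omega))
    refine hcop.pow_left.dvd_of_dvd_mul_left ⟨q * (3 * y ^ 2 + n * (n - 1)), ?_⟩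
    linear_combination h + (3 * y ^ 2 + n * (n - 1)) * hn
  obtain ⟨hpx, hpy⟩ := Int.pow_succ_dvd_of_pow_dvd_sq_add_sq hp4 i hsum_sq
  have hdvd : (p : ℤ) ^ (2 * i + 1) * p ∣ (p : ℤ) ^ (2 * i + 1) * (q * (n * (n - 1))) := by
    rw [← pow_succ, show 2 * i + 1 + 1 = (i + 1) * 2 by ring, pow_mul,
      show (p : ℤ) ^ (2 * i + 1) * (q * (n * (n - 1))) = 3 * x ^ 2 - 3 * n * y ^ 2 by
        linear_combination -h - n * (n - 1) * hn]
    exact dvd_sub (dvd_mul_of_dvd_right (pow_dvd_pow_of_dvd hpx 2) _)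
      (dvd_mul_of_dvd_right (pow_dvd_pow_of_dvd hpy 2) _)
  rcases hpZ.dvd_or_dvd ((mul_dvd_mul_iff_left (pow_ne_zero _ hpZ.ne_zero)).mp hdvd) with hpq | hpn
  · exact hq hpq
  · refine hpZ.not_dvd_mul_sub_one_of_dvd_add_one (fun hp2 ↦ ?_)
      (hn ▸ dvd_mul_of_dvd_left (dvd_pow_self _ (by omega)) _) hpn
    have hp_le : (p : ℤ) ≤ 2 := Int.le_of_dvd two_pos hp2
    omega

end SumTwoSquares

theorem stmt_general (M a s m₁ : ℕ)
    (hsum : ∑ i ∈ Finset.range M, (a + i) ^ 2 = s ^ 2)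
    (hMeq : M = 24 * m₁ + 16) :
    ∀ p : ℕ, p.Prime → 3 < p → p % 4 = 3 →
      ¬ ∃ i q : ℕ, 1 ≤ q ∧ ¬ p ∣ q ∧ 24 * m₁ + 17 = p ^ (2 * i + 1) * q := by
  rintro p hp hp3 hp4 ⟨i, q, -, hpq, hMq⟩
  have := Fact.mk hp
  have hs : 3 * (2 * s : ℤ) ^ 2 = 3 * M * (2 * a + M - 1) ^ 2 + M * (M - 1) * (M + 1) := by
    have hsumZ := congrArg ((↑) : ℕ → ℤ) hsum
    push_cast at hsumZ
    rw [← twelve_mul_sum_range_sq]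
    linear_combination -12 * hsumZ
  exact add_one_ne_prime_pow_odd_mul hp3 hp4 hs i (mt Int.natCast_dvd_natCast.mp hpq)
    (by rw [hMeq]; exact_mod_cast hMq)

theorem stmt (M a s m₁ : ℕ) (hM : 1 < M) (ha : 1 ≤ a) (hs : 1 ≤ s)
    (hsum : ∑ i ∈ Finset.range M, (a + i) ^ 2 = s ^ 2)
    (hMeq : M = 24 * m₁ + 16) :
    ∀ p : ℕ, p.Prime → 3 < p → p % 4 = 3 →
      ¬ ∃ i q : ℕ, 1 ≤ q ∧ ¬ p ∣ q ∧ 24 * m₁ + 17 = p ^ (2 * i + 1) * q :=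
  stmt_general M a s m₁ hsum hMeq
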